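/- arXiv:2407.01359 — 3 statements merged into one kernel-verified Lean document; each statement's English description precedes it below -/
import Mathlib

section
/- Let Ĥ = Ĥ(v,x,y) and Ω = Ω(v,x) > 0 be smooth real functions on ℝ⁴ (Ĥ independent of u, Ω independent of u and y), and let g = Ω^{−2} ĝ be the generalized Siklos metric. Then its Ricci tensor is R_{μν} = [ (1/2)(Ĥ_xx + Ĥ_yy) + 2 Ω_vv/Ω − Ω_x Ĥ_x/Ω ] k_μ k_ν + (2 Ω_xx/Ω) e_μ e_ν + (2 Ω_vx/Ω)(k_μ e_ν + e_μ k_ν) + (3 Ω_x² − Ω Ω_xx) g_{μν}, and its scalar curvature is R = 12 Ω_x² − 6 Ω Ω_xx. (This is the coordinate content of the paper's formula for the Einstein tensor of a generalized Siklos space-time, expressed in standard curvature conventions.) -/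
noncomputable section

/-- Points of ℝ⁴, with coordinates (u,v,x,y) indexed by 0,1,2,3. -/
abbrev Pt : Type := Fin 4 → ℝ

/-- Partial derivative of a scalar function along the μ-th coordinate. -/
def pd (μ : Fin 4) (f : Pt → ℝ) (p : Pt) : ℝ :=
  fderiv ℝ f p (Pi.single μ 1)

/-- `f` is independent of the μ-th coordinate. -/
def IndepCoord (μ : Fin 4) (f : Pt → ℝ) : Prop :=
  ∀ p t, f (Function.update p μ t) = f p

/-- Christoffel symbols Γ^λ_{μν} of a metric `g` with inverse `ginv`:
Γ^λ_{μν} = (1/2) Σ_ρ g^{λρ} (∂_μ g_{ρν} + ∂_ν g_{ρμ} − ∂_ρ g_{μν}). -/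
def Christoffel (g ginv : Fin 4 → Fin 4 → Pt → ℝ) (l μ ν : Fin 4) (p : Pt) : ℝ :=
  (1/2) * ∑ ρ, ginv l ρ p * (pd μ (g ρ ν) p + pd ν (g ρ μ) p - pd ρ (g μ ν) p)

/-- Ricci tensor:
R_{μν} = Σ_ρ ∂_ρ Γ^ρ_{μν} − Σ_ρ ∂_ν Γ^ρ_{ρμ}
        + Σ_{ρσ} (Γ^ρ_{ρσ} Γ^σ_{μν} − Γ^ρ_{νσ} Γ^σ_{ρμ}). -/
def RicciT (g ginv : Fin 4 → Fin 4 → Pt → ℝ) (μ ν : Fin 4) (p : Pt) : ℝ :=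
  (∑ ρ, pd ρ (Christoffel g ginv ρ μ ν) p)
    - (∑ ρ, pd ν (Christoffel g ginv ρ ρ μ) p)
    + ∑ ρ, ∑ σ,
        (Christoffel g ginv ρ ρ σ p * Christoffel g ginv σ μ ν p
          - Christoffel g ginv ρ ν σ p * Christoffel g ginv σ ρ μ p)

/-- Scalar curvature R = Σ_{μν} g^{μν} R_{μν}. -/
def ScalarCurv (g ginv : Fin 4 → Fin 4 → Pt → ℝ) (p : Pt) : ℝ :=
  ∑ μ, ∑ ν, ginv μ ν p * RicciT g ginv μ ν p

/-- The pp-wave metric ĝ: ĝ_{uv} = ĝ_{vu} = 1, ĝ_{vv} = Ĥ, ĝ_{xx} = ĝ_{yy} = −1. -/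
def ppMetric (H : Pt → ℝ) (μ ν : Fin 4) (p : Pt) : ℝ :=
  if μ = 0 ∧ ν = 1 then 1
  else if μ = 1 ∧ ν = 0 then 1
  else if μ = 1 ∧ ν = 1 then H p
  else if μ = 2 ∧ ν = 2 then -1
  else if μ = 3 ∧ ν = 3 then -1
  else 0

/-- The inverse pp-wave metric: ĝ^{uu} = −Ĥ, ĝ^{uv} = ĝ^{vu} = 1, ĝ^{xx} = ĝ^{yy} = −1. -/
def ppMetricInv (H : Pt → ℝ) (μ ν : Fin 4) (p : Pt) : ℝ :=
  if μ = 0 ∧ ν = 0 then -H p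
  else if μ = 0 ∧ ν = 1 then 1
  else if μ = 1 ∧ ν = 0 then 1
  else if μ = 2 ∧ ν = 2 then -1
  else if μ = 3 ∧ ν = 3 then -1
  else 0

/-- The covector k = dv. -/
def kvec (μ : Fin 4) : ℝ := if μ = 1 then 1 else 0

/-- The covector e = dx. -/
def evec (μ : Fin 4) : ℝ := if μ = 2 then 1 else 0

/-- The generalized Siklos metric g = Ω⁻² ĝ. -/
def genSiklos (H Ω : Pt → ℝ) (μ ν : Fin 4) (p : Pt) : ℝ :=
  (Ω p ^ 2)⁻¹ * ppMetric H μ ν p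

/-- The inverse of the generalized Siklos metric, g^{μν} = Ω² ĝ^{μν}. -/
def genSiklosInv (H Ω : Pt → ℝ) (μ ν : Fin 4) (p : Pt) : ℝ :=
  Ω p ^ 2 * ppMetricInv H μ ν p


namespace SiklosAux

open Function

variable {f g : Pt → ℝ} {p : Pt} {μ ν : Fin 4}

lemma pd_const (c : ℝ) : pd μ (fun _ => c) p = 0 := by
  simp [pd]

lemma pd_add (hf : DifferentiableAt ℝ f p) (hg : DifferentiableAt ℝ g p) :
    pd μ (fun q => f q + g q) p = pd μ f p + pd μ g p := by
  simp [pd, fderiv_fun_add hf hg]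

lemma pd_neg : pd μ (fun q => -f q) p = -pd μ f p := by
  simp [pd, fderiv_neg]

lemma pd_sub (hf : DifferentiableAt ℝ f p) (hg : DifferentiableAt ℝ g p) :
    pd μ (fun q => f q - g q) p = pd μ f p - pd μ g p := by
  simp [pd, fderiv_fun_sub hf hg]

lemma pd_mul (hf : DifferentiableAt ℝ f p) (hg : DifferentiableAt ℝ g p) :
    pd μ (fun q => f q * g q) p = pd μ f p * g p + f p * pd μ g p := by
  simp [pd, fderiv_fun_mul hf hg]; ring

lemma pd_const_mul (c : ℝ) (hf : DifferentiableAt ℝ f p) :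
    pd μ (fun q => c * f q) p = c * pd μ f p := by
  simp [pd, fderiv_const_mul hf c]

lemma pd_div_const (c : ℝ) (hf : DifferentiableAt ℝ f p) :
    pd μ (fun q => f q / c) p = pd μ f p / c := by
  simp [pd, div_eq_mul_inv, fderiv_mul_const hf]; ring

lemma pd_inv (hf : DifferentiableAt ℝ f p) (hne : f p ≠ 0) :
    pd μ (fun q => (f q)⁻¹) p = -(pd μ f p) / f p ^ 2 := by
  have h : HasFDerivAt (fun q => (f q)⁻¹)
      ((ContinuousLinearMap.smulRight (1 : ℝ →L[ℝ] ℝ) (-(f p ^ 2)⁻¹)).comp (fderiv ℝ f p)) p :=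
    (hasFDerivAt_inv hne).comp p hf.hasFDerivAt
  simp [pd, h.fderiv]
  ring

lemma contDiff_pd (hf : ContDiff ℝ (⊤ : ℕ∞) f) (μ : Fin 4) : ContDiff ℝ (⊤ : ℕ∞) (pd μ f) :=
  ((hf.fderiv_right (m := (⊤ : ℕ∞)) (by simp)).clm_apply contDiff_const :)

@[fun_prop]
lemma pd_differentiable (μ : Fin 4) (f : Pt → ℝ) (hf : ContDiff ℝ (⊤ : ℕ∞) f) :
    Differentiable ℝ (pd μ f) :=
  (contDiff_pd hf μ).differentiable (by simp)

lemma pd_comm (hf : ContDiff ℝ (⊤ : ℕ∞) f) (μ ν : Fin 4) (p : Pt) :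
    pd μ (pd ν f) p = pd ν (pd μ f) p := by
  have hdf : Differentiable ℝ (fderiv ℝ f) := (hf.fderiv_right (m := (⊤ : ℕ∞)) (by simp)).differentiable (by simp)
  have key : ∀ (a b : Fin 4),
      pd a (pd b f) p = fderiv ℝ (fderiv ℝ f) p (Pi.single a 1) (Pi.single b 1) := by
    intro a b
    have : pd b f = fun q => (fderiv ℝ f q) (Pi.single b 1) := rfl
    rw [pd, this, fderiv_clm_apply (hdf p) (differentiableAt_const _)]
    simp
  rw [key, key]
  exact second_derivative_symmetric
    (fun y => ((hf.differentiable (by simp)) y).hasFDerivAt)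
    (hdf p).hasFDerivAt _ _

lemma pd_eq_zero_of_indep (hf : Differentiable ℝ f) (h : IndepCoord μ f) (p : Pt) :
    pd μ f p = 0 := by
  have hline : ∀ t : ℝ, p + t • (Pi.single μ 1 : Pt) = Function.update p μ (p μ + t) := by
    intro t; funext i
    by_cases hi : i = μ
    · subst hi; simp
    · simp [Function.update, hi, Pi.single_eq_of_ne hi]
  have hcurve : HasDerivAt (fun t : ℝ => p + t • (Pi.single μ 1 : Pt)) (Pi.single μ 1) 0 := by
    simpa using ((hasDerivAt_id (0:ℝ)).smul_const (Pi.single μ 1 : Pt)).const_add p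
  have hp0 : p + (0:ℝ) • (Pi.single μ 1 : Pt) = p := by simp
  have hfp : HasFDerivAt f (fderiv ℝ f p) (p + (0:ℝ) • (Pi.single μ 1 : Pt)) := by
    rw [hp0]; exact (hf p).hasFDerivAt
  have h2 : HasDerivAt (fun t : ℝ => f (p + t • (Pi.single μ 1 : Pt))) (pd μ f p) 0 :=
    hfp.comp_hasDerivAt 0 hcurve
  have h3 : (fun t : ℝ => f (p + t • (Pi.single μ 1 : Pt))) = fun _ => f p := by
    funext t; rw [hline, h]
  rw [h3] at h2
  exact ((hasDerivAt_const (0:ℝ) (f p)).unique h2).symm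

lemma fin4_mk0 (h : 0 < 4) : (⟨0, h⟩ : Fin 4) = 0 := rfl
lemma fin4_mk1 (h : 1 < 4) : (⟨1, h⟩ : Fin 4) = 1 := rfl
lemma fin4_mk2 (h : 2 < 4) : (⟨2, h⟩ : Fin 4) = 2 := rfl
lemma fin4_mk3 (h : 3 < 4) : (⟨3, h⟩ : Fin 4) = 3 := rfl

/-- Explicit closed form of the Christoffel symbols of the generalized Siklos metric. -/
def Γe (H Ω : Pt → ℝ) (l μ ν : Fin 4) : Pt → ℝ :=
  if l = 0 ∧ (μ = 0 ∧ ν = 2 ∨ μ = 2 ∧ ν = 0) then fun p => -(pd 2 Ω p * (Ω p)⁻¹)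
  else if l = 0 ∧ μ = 1 ∧ ν = 1 then fun p => H p * (pd 1 Ω p * (Ω p)⁻¹) + pd 1 H p / 2
  else if l = 0 ∧ (μ = 1 ∧ ν = 2 ∨ μ = 2 ∧ ν = 1) then fun p => pd 2 H p / 2
  else if l = 0 ∧ (μ = 1 ∧ ν = 3 ∨ μ = 3 ∧ ν = 1) then fun p => pd 3 H p / 2
  else if l = 0 ∧ (μ = 2 ∧ ν = 2 ∨ μ = 3 ∧ ν = 3) then fun p => -(pd 1 Ω p * (Ω p)⁻¹)
  else if l = 1 ∧ μ = 1 ∧ ν = 1 then fun p => -(2 * (pd 1 Ω p * (Ω p)⁻¹))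
  else if l = 1 ∧ (μ = 1 ∧ ν = 2 ∨ μ = 2 ∧ ν = 1) then fun p => -(pd 2 Ω p * (Ω p)⁻¹)
  else if l = 2 ∧ (μ = 0 ∧ ν = 1 ∨ μ = 1 ∧ ν = 0) then fun p => -(pd 2 Ω p * (Ω p)⁻¹)
  else if l = 2 ∧ μ = 1 ∧ ν = 1 then fun p => pd 2 H p / 2 - H p * (pd 2 Ω p * (Ω p)⁻¹)
  else if l = 2 ∧ (μ = 1 ∧ ν = 2 ∨ μ = 2 ∧ ν = 1) then fun p => -(pd 1 Ω p * (Ω p)⁻¹)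
  else if l = 2 ∧ μ = 2 ∧ ν = 2 then fun p => -(pd 2 Ω p * (Ω p)⁻¹)
  else if l = 2 ∧ μ = 3 ∧ ν = 3 then fun p => pd 2 Ω p * (Ω p)⁻¹
  else if l = 3 ∧ μ = 1 ∧ ν = 1 then fun p => pd 3 H p / 2
  else if l = 3 ∧ (μ = 1 ∧ ν = 3 ∨ μ = 3 ∧ ν = 1) then fun p => -(pd 1 Ω p * (Ω p)⁻¹)
  else if l = 3 ∧ (μ = 2 ∧ ν = 3 ∨ μ = 3 ∧ ν = 2) then fun p => -(pd 2 Ω p * (Ω p)⁻¹)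
  else fun _ => (0:ℝ)

set_option maxHeartbeats 4000000 in
theorem hG_lemma (H Ω : Pt → ℝ)
    (hH : ContDiff ℝ (⊤ : ℕ∞) H) (hΩ : ContDiff ℝ (⊤ : ℕ∞) Ω)
    (hHu : IndepCoord 0 H) (hΩu : IndepCoord 0 Ω) (hΩy : IndepCoord 3 Ω)
    (hΩpos : ∀ p : Pt, 0 < Ω p) :
    ∀ l μ ν, Christoffel (genSiklos H Ω) (genSiklosInv H Ω) l μ ν = Γe H Ω l μ ν := by
  have dΩ : Differentiable ℝ Ω := hΩ.differentiable (by simp)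
  have dH : Differentiable ℝ H := hH.differentiable (by simp)
  have e0Ω : pd 0 Ω = fun _ => 0 := funext (pd_eq_zero_of_indep dΩ hΩu)
  have e3Ω : pd 3 Ω = fun _ => 0 := funext (pd_eq_zero_of_indep dΩ hΩy)
  have e0H : pd 0 H = fun _ => 0 := funext (pd_eq_zero_of_indep dH hHu)
  have h0Ω : ∀ q, pd 0 Ω q = 0 := fun q => by rw [e0Ω]
  have h3Ω : ∀ q, pd 3 Ω q = 0 := fun q => by rw [e3Ω]
  have h0H : ∀ q, pd 0 H q = 0 := fun q => by rw [e0H]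
  have hne : ∀ q, Ω q ≠ 0 := fun q => (hΩpos q).ne'
  have hg00 : genSiklos H Ω 0 0 = fun _ => (0:ℝ) := by funext q; simp [genSiklos, ppMetric]
  have hg01 : genSiklos H Ω 0 1 = fun q => (Ω q * Ω q)⁻¹ := by
    funext q; simp [genSiklos, ppMetric, pow_two]
  have hg02 : genSiklos H Ω 0 2 = fun _ => (0:ℝ) := by funext q; simp [genSiklos, ppMetric]
  have hg03 : genSiklos H Ω 0 3 = fun _ => (0:ℝ) := by funext q; simp [genSiklos, ppMetric]
  have hg10 : genSiklos H Ω 1 0 = fun q => (Ω q * Ω q)⁻¹ := by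
    funext q; simp [genSiklos, ppMetric, pow_two]
  have hg11 : genSiklos H Ω 1 1 = fun q => (Ω q * Ω q)⁻¹ * H q := by
    funext q; simp [genSiklos, ppMetric, pow_two]
  have hg12 : genSiklos H Ω 1 2 = fun _ => (0:ℝ) := by funext q; simp [genSiklos, ppMetric]
  have hg13 : genSiklos H Ω 1 3 = fun _ => (0:ℝ) := by funext q; simp [genSiklos, ppMetric]
  have hg20 : genSiklos H Ω 2 0 = fun _ => (0:ℝ) := by funext q; simp [genSiklos, ppMetric]
  have hg21 : genSiklos H Ω 2 1 = fun _ => (0:ℝ) := by funext q; simp [genSiklos, ppMetric]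
  have hg22 : genSiklos H Ω 2 2 = fun q => -(Ω q * Ω q)⁻¹ := by
    funext q; simp [genSiklos, ppMetric, pow_two]
  have hg23 : genSiklos H Ω 2 3 = fun _ => (0:ℝ) := by funext q; simp [genSiklos, ppMetric]
  have hg30 : genSiklos H Ω 3 0 = fun _ => (0:ℝ) := by funext q; simp [genSiklos, ppMetric]
  have hg31 : genSiklos H Ω 3 1 = fun _ => (0:ℝ) := by funext q; simp [genSiklos, ppMetric]
  have hg32 : genSiklos H Ω 3 2 = fun _ => (0:ℝ) := by funext q; simp [genSiklos, ppMetric]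
  have hg33 : genSiklos H Ω 3 3 = fun q => -(Ω q * Ω q)⁻¹ := by
    funext q; simp [genSiklos, ppMetric, pow_two]
  intro l μ ν
  funext p
  have h1 : Ω p ≠ 0 := hne p
  have h2 : Ω p * Ω p ≠ 0 := mul_ne_zero h1 h1
  fin_cases l <;> fin_cases μ <;> fin_cases ν <;>
  · simp only [fin4_mk0, fin4_mk1, fin4_mk2, fin4_mk3, Christoffel, Fin.sum_univ_four,
         genSiklosInv, ppMetricInv, Γe,
         Fin.reduceEq, reduceIte, and_true, true_and, and_false, false_and,
         or_false, false_or, and_self, or_self, if_true, if_false, or_true, true_or]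
    try simp only [hg00, hg01, hg02, hg03, hg10, hg11, hg12, hg13,
         hg20, hg21, hg22, hg23, hg30, hg31, hg32, hg33]
    try simp (disch := first | assumption | fun_prop (disch := assumption)) only
        [pd_add, pd_sub, pd_neg, pd_mul, pd_inv, pd_const, pd_const_mul, pd_div_const,
         h0Ω, h3Ω, h0H]
    first
    | ring1
    | (field_simp; ring1)
    | field_simp

set_option maxHeartbeats 16000000 in
theorem ricci_lemma (H Ω : Pt → ℝ)
    (hH : ContDiff ℝ (⊤ : ℕ∞) H) (hΩ : ContDiff ℝ (⊤ : ℕ∞) Ω)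
    (hHu : IndepCoord 0 H) (hΩu : IndepCoord 0 Ω) (hΩy : IndepCoord 3 Ω)
    (hΩpos : ∀ p : Pt, 0 < Ω p) :
    ∀ μ ν : Fin 4, ∀ p : Pt,
        RicciT (genSiklos H Ω) (genSiklosInv H Ω) μ ν p
          = ((1/2) * (pd 2 (pd 2 H) p + pd 3 (pd 3 H) p)
                + 2 * pd 1 (pd 1 Ω) p / Ω p
                - pd 2 Ω p * pd 2 H p / Ω p) * kvec μ * kvec ν
            + (2 * pd 2 (pd 2 Ω) p / Ω p) * evec μ * evec ν
            + (2 * pd 1 (pd 2 Ω) p / Ω p) * (kvec μ * evec ν + evec μ * kvec ν)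
            + (3 * (pd 2 Ω p) ^ 2 - Ω p * pd 2 (pd 2 Ω) p) * genSiklos H Ω μ ν p := by
  have dΩ : Differentiable ℝ Ω := hΩ.differentiable (by simp)
  have dH : Differentiable ℝ H := hH.differentiable (by simp)
  have e0Ω : pd 0 Ω = fun _ => 0 := funext (pd_eq_zero_of_indep dΩ hΩu)
  have e3Ω : pd 3 Ω = fun _ => 0 := funext (pd_eq_zero_of_indep dΩ hΩy)
  have e0H : pd 0 H = fun _ => 0 := funext (pd_eq_zero_of_indep dH hHu)
  have h0Ω : ∀ q, pd 0 Ω q = 0 := fun q => by rw [e0Ω]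
  have h3Ω : ∀ q, pd 3 Ω q = 0 := fun q => by rw [e3Ω]
  have h0H : ∀ q, pd 0 H q = 0 := fun q => by rw [e0H]
  have hΩ01 : ∀ q, pd 0 (pd 1 Ω) q = 0 := fun q => by
    rw [pd_comm hΩ, e0Ω, pd_const]
  have hΩ02 : ∀ q, pd 0 (pd 2 Ω) q = 0 := fun q => by
    rw [pd_comm hΩ, e0Ω, pd_const]
  have hΩ31 : ∀ q, pd 3 (pd 1 Ω) q = 0 := fun q => by
    rw [pd_comm hΩ, e3Ω, pd_const]
  have hΩ32 : ∀ q, pd 3 (pd 2 Ω) q = 0 := fun q => by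
    rw [pd_comm hΩ, e3Ω, pd_const]
  have hΩ21 : ∀ q, pd 2 (pd 1 Ω) q = pd 1 (pd 2 Ω) q := fun q => pd_comm hΩ 2 1 q
  have hH01 : ∀ q, pd 0 (pd 1 H) q = 0 := fun q => by
    rw [pd_comm hH, e0H, pd_const]
  have hH02 : ∀ q, pd 0 (pd 2 H) q = 0 := fun q => by
    rw [pd_comm hH, e0H, pd_const]
  have hH03 : ∀ q, pd 0 (pd 3 H) q = 0 := fun q => by
    rw [pd_comm hH, e0H, pd_const]
  have hH21 : ∀ q, pd 2 (pd 1 H) q = pd 1 (pd 2 H) q := fun q => pd_comm hH 2 1 q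
  have hH31 : ∀ q, pd 3 (pd 1 H) q = pd 1 (pd 3 H) q := fun q => pd_comm hH 3 1 q
  have hH32 : ∀ q, pd 3 (pd 2 H) q = pd 2 (pd 3 H) q := fun q => pd_comm hH 3 2 q
  have hne : ∀ q, Ω q ≠ 0 := fun q => (hΩpos q).ne'
  have hG := hG_lemma H Ω hH hΩ hHu hΩu hΩy hΩpos
  intro μ ν p
  have h1 : Ω p ≠ 0 := hne p
  fin_cases μ <;> fin_cases ν <;>
  · simp only [fin4_mk0, fin4_mk1, fin4_mk2, fin4_mk3, RicciT, hG, Fin.sum_univ_four,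
         kvec, evec, genSiklos, ppMetric, Γe,
         Fin.reduceEq, reduceIte, and_true, true_and, and_false, false_and,
         or_false, false_or, and_self, or_self, if_true, if_false, or_true, true_or]
    try simp (disch := first | assumption | fun_prop (disch := assumption)) only
        [pd_add, pd_sub, pd_neg, pd_mul, pd_inv, pd_const, pd_const_mul, pd_div_const,
         h0Ω, h3Ω, h0H, hΩ01, hΩ02, hΩ31, hΩ32, hΩ21, hH01, hH02, hH03, hH21, hH31, hH32]
    first
    | ring1
    | (field_simp; ring1)
    | field_simp

end SiklosAux

/-- the Ricci tensor and scalar curvature of the generalized Siklos metric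
g = Ω⁻² ĝ, with Ĥ = Ĥ(v,x,y) and Ω = Ω(v,x) > 0:
R_{μν} = [(1/2)(Ĥ_xx + Ĥ_yy) + 2 Ω_vv/Ω − Ω_x Ĥ_x/Ω] k_μ k_ν + (2 Ω_xx/Ω) e_μ e_ν
          + (2 Ω_vx/Ω)(k_μ e_ν + e_μ k_ν) + (3 Ω_x² − Ω Ω_xx) g_{μν},
R = 12 Ω_x² − 6 Ω Ω_xx. -/
theorem genSiklos_ricci_and_scalar (H Ω : Pt → ℝ)
    (hH : ContDiff ℝ (⊤ : ℕ∞) H) (hΩ : ContDiff ℝ (⊤ : ℕ∞) Ω)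
    (hHu : IndepCoord 0 H) (hΩu : IndepCoord 0 Ω) (hΩy : IndepCoord 3 Ω)
    (hΩpos : ∀ p : Pt, 0 < Ω p) :
    (∀ μ ν : Fin 4, ∀ p : Pt,
        RicciT (genSiklos H Ω) (genSiklosInv H Ω) μ ν p
          = ((1/2) * (pd 2 (pd 2 H) p + pd 3 (pd 3 H) p)
                + 2 * pd 1 (pd 1 Ω) p / Ω p
                - pd 2 Ω p * pd 2 H p / Ω p) * kvec μ * kvec ν
            + (2 * pd 2 (pd 2 Ω) p / Ω p) * evec μ * evec ν
            + (2 * pd 1 (pd 2 Ω) p / Ω p) * (kvec μ * evec ν + evec μ * kvec ν)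
            + (3 * (pd 2 Ω p) ^ 2 - Ω p * pd 2 (pd 2 Ω) p) * genSiklos H Ω μ ν p)
    ∧ (∀ p : Pt,
        ScalarCurv (genSiklos H Ω) (genSiklosInv H Ω) p
          = 12 * (pd 2 Ω p) ^ 2 - 6 * Ω p * pd 2 (pd 2 Ω) p) := by
  have hric := SiklosAux.ricci_lemma H Ω hH hΩ hHu hΩu hΩy hΩpos
  refine ⟨hric, ?_⟩
  intro p
  have h1 : Ω p ≠ 0 := (hΩpos p).ne'
  simp only [ScalarCurv, Fin.sum_univ_four, hric, kvec, evec, genSiklos, genSiklosInv,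
      ppMetric, ppMetricInv,
      Fin.reduceEq, reduceIte, and_true, true_and, and_false, false_and,
      or_false, false_or, and_self, or_self, if_true, if_false, or_true, true_or]
  field_simp
  ring1
end
end

section
/- Let b > 0 be a constant and Ĥ = Ĥ(v,x,y) a smooth real function independent of u. On the domain U = {x > 0} ⊂ ℝ⁴, the Ricci tensor of the Siklos metric g = (b²x²)^{−1} ĝ is R_{μν} = (1/2)( Ĥ_xx + Ĥ_yy − (2/x) Ĥ_x ) k_μ k_ν + 3 b² g_{μν}, where k = dv. -/
noncomputable section

/-- The Siklos metric g = (b²x²)⁻¹ ĝ (meaningful on the domain U = {x > 0}). -/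
def siklosMetric (b : ℝ) (H : Pt → ℝ) (μ ν : Fin 4) (p : Pt) : ℝ :=
  (b ^ 2 * (p 2) ^ 2)⁻¹ * ppMetric H μ ν p

/-- The inverse of the Siklos metric, g^{μν} = b²x² ĝ^{μν}. -/
def siklosMetricInv (b : ℝ) (H : Pt → ℝ) (μ ν : Fin 4) (p : Pt) : ℝ :=
  b ^ 2 * (p 2) ^ 2 * ppMetricInv H μ ν p

namespace pdcalc

variable {f g : Pt → ℝ} {p : Pt} {m : Fin 4} {c : ℝ}

@[fun_prop] theorem diff_coord (i : Fin 4) : Differentiable ℝ (fun q : Pt => q i) :=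
  fun _ => (ContinuousLinearMap.proj i : Pt →L[ℝ] ℝ).differentiableAt

theorem pd_congr {q : Pt} (h : f =ᶠ[nhds q] g) : pd m f q = pd m g q := by
  unfold pd; rw [h.fderiv_eq]

theorem pd_const : pd m (fun _ => c) p = 0 := by
  unfold pd; rw [fderiv_fun_const]; rfl

theorem pd_coord (i : Fin 4) : pd m (fun q => q i) p = if i = m then 1 else 0 := by
  unfold pd
  have : (fun q : Pt => q i) = (ContinuousLinearMap.proj i : Pt →L[ℝ] ℝ) := rfl
  rw [this, ContinuousLinearMap.fderiv]
  simp [ContinuousLinearMap.proj_apply, Pi.single_apply]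

theorem pd_add (hf : DifferentiableAt ℝ f p) (hg : DifferentiableAt ℝ g p) :
    pd m (fun q => f q + g q) p = pd m f p + pd m g p := by
  unfold pd; rw [fderiv_fun_add hf hg]; rfl

theorem pd_sub (hf : DifferentiableAt ℝ f p) (hg : DifferentiableAt ℝ g p) :
    pd m (fun q => f q - g q) p = pd m f p - pd m g p := by
  unfold pd; rw [fderiv_fun_sub hf hg]; rfl

theorem pd_neg : pd m (fun q => -f q) p = -pd m f p := by
  unfold pd; rw [fderiv_fun_neg]; rfl

theorem pd_mul (hf : DifferentiableAt ℝ f p) (hg : DifferentiableAt ℝ g p) :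
    pd m (fun q => f q * g q) p = pd m f p * g p + f p * pd m g p := by
  unfold pd; rw [fderiv_fun_mul hf hg]
  simp [ContinuousLinearMap.add_apply, ContinuousLinearMap.smul_apply]
  ring

theorem pd_inv (hf : DifferentiableAt ℝ f p) (h0 : f p ≠ 0) :
    pd m (fun q => (f q)⁻¹) p = -(pd m f p / f p ^ 2) := by
  unfold pd
  have : (fun q => (f q)⁻¹) = Inv.inv ∘ f := rfl
  rw [this, fderiv_comp p (differentiableAt_inv h0) hf, fderiv_inv' h0]
  simp only [ContinuousLinearMap.comp_apply, ContinuousLinearMap.neg_apply,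
    ContinuousLinearMap.mulLeftRight_apply]
  rw [sq]
  field_simp

theorem pd_indep (hind : IndepCoord 0 f) (hf : DifferentiableAt ℝ f p) :
    pd 0 f p = 0 := by
  have hline : HasDerivAt (fun t : ℝ => p + t • (Pi.single 0 1 : Pt)) (Pi.single 0 1) 0 := by
    simpa using ((hasDerivAt_id (0:ℝ)).smul_const (Pi.single 0 1 : Pt)).const_add p
  have hcomp : HasDerivAt (fun t : ℝ => f (p + t • (Pi.single 0 1 : Pt)))
      (fderiv ℝ f p (Pi.single 0 1)) 0 := by
    have hf' : HasFDerivAt f (fderiv ℝ f p) (p + (0:ℝ) • (Pi.single 0 1 : Pt)) := by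
      simpa using hf.hasFDerivAt
    exact hf'.comp_hasDerivAt 0 hline
  have hconst : (fun t : ℝ => f (p + t • (Pi.single 0 1 : Pt))) = fun _ => f p := by
    funext t
    have : p + t • (Pi.single 0 1 : Pt) = Function.update p 0 (p 0 + t) := by
      funext i
      by_cases hi : i = 0 <;> simp [hi, Function.update, Pi.single_apply]
    rw [this, hind]
  rw [hconst] at hcomp
  have := (hasDerivAt_const (0:ℝ) (f p)).unique hcomp
  exact this.symm

end pdcalc

variable {H : Pt → ℝ}

theorem fderiv_translate (hH : ContDiff ℝ (⊤ : ℕ∞) H) (hHu : IndepCoord 0 H) (p : Pt) (s : ℝ) :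
    fderiv ℝ H (p + s • (Pi.single 0 1 : Pt)) = fderiv ℝ H p := by
  have hfun : (fun q : Pt => H (q + s • (Pi.single 0 1 : Pt))) = H := by
    funext q
    have : q + s • (Pi.single 0 1 : Pt) = Function.update q 0 (q 0 + s) := by
      funext i
      by_cases hi : i = 0 <;> simp [hi, Function.update, Pi.single_apply]
    rw [this, hHu]
  have hd : HasFDerivAt (fun q : Pt => H (q + s • (Pi.single 0 1 : Pt)))
      (fderiv ℝ H (p + s • (Pi.single 0 1 : Pt))) p := by
    have h1 : HasFDerivAt (fun q : Pt => q + s • (Pi.single 0 1 : Pt))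
        (ContinuousLinearMap.id ℝ Pt) p := (hasFDerivAt_id p).add_const _
    have h2 : HasFDerivAt H (fderiv ℝ H (p + s • (Pi.single 0 1 : Pt)))
        (p + s • (Pi.single 0 1 : Pt)) :=
      ((hH.differentiable (by simp)) _).hasFDerivAt
    have h3 := h2.comp p h1
    rw [ContinuousLinearMap.comp_id] at h3
    exact h3
  rw [hfun] at hd
  exact hd.fderiv.symm

theorem indep_pd (hH : ContDiff ℝ (⊤ : ℕ∞) H) (hHu : IndepCoord 0 H) (i : Fin 4) : IndepCoord 0 (pd i H) := by
  intro p t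
  have : Function.update p 0 t = p + (t - p 0) • (Pi.single 0 1 : Pt) := by
    funext j
    by_cases hj : j = 0 <;> simp [hj, Function.update, Pi.single_apply]
  unfold pd
  rw [this, fderiv_translate hH hHu]

theorem contDiff_pd (hH : ContDiff ℝ (⊤ : ℕ∞) H) (i : Fin 4) : ContDiff ℝ (⊤ : ℕ∞) (pd i H) := by
  have h1 : ContDiff ℝ (⊤ : ℕ∞) (fderiv ℝ H) := hH.fderiv_right (by simp)
  exact h1.clm_apply contDiff_const

theorem diff_pd (hH : ContDiff ℝ (⊤ : ℕ∞) H) (i : Fin 4) : Differentiable ℝ (pd i H) :=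
  (contDiff_pd hH i).differentiable (by simp)

theorem pd0_pd (hH : ContDiff ℝ (⊤ : ℕ∞) H) (hHu : IndepCoord 0 H) (i : Fin 4) (p : Pt) :
    pd 0 (pd i H) p = 0 :=
  pdcalc.pd_indep (indep_pd hH hHu i) ((diff_pd hH i).differentiableAt)

theorem pd0_H (hH : ContDiff ℝ (⊤ : ℕ∞) H) (hHu : IndepCoord 0 H) (p : Pt) :
    pd 0 H p = 0 :=
  pdcalc.pd_indep hHu ((hH.differentiable (by simp)).differentiableAt)

def Gam (H : Pt → ℝ) (l μ ν : Fin 4) (p : Pt) : ℝ :=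
  if l = 0 ∧ (μ = 0 ∧ ν = 2 ∨ μ = 2 ∧ ν = 0) then -(p 2)⁻¹
  else if l = 0 ∧ μ = 1 ∧ ν = 1 then (1/2) * pd 1 H p
  else if l = 0 ∧ (μ = 1 ∧ ν = 2 ∨ μ = 2 ∧ ν = 1) then (1/2) * pd 2 H p
  else if l = 0 ∧ (μ = 1 ∧ ν = 3 ∨ μ = 3 ∧ ν = 1) then (1/2) * pd 3 H p
  else if l = 1 ∧ (μ = 1 ∧ ν = 2 ∨ μ = 2 ∧ ν = 1) then -(p 2)⁻¹
  else if l = 2 ∧ (μ = 0 ∧ ν = 1 ∨ μ = 1 ∧ ν = 0) then -(p 2)⁻¹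
  else if l = 2 ∧ μ = 1 ∧ ν = 1 then -(H p) * (p 2)⁻¹ + (1/2) * pd 2 H p
  else if l = 2 ∧ μ = 2 ∧ ν = 2 then -(p 2)⁻¹
  else if l = 2 ∧ μ = 3 ∧ ν = 3 then (p 2)⁻¹
  else if l = 3 ∧ μ = 1 ∧ ν = 1 then (1/2) * pd 3 H p
  else if l = 3 ∧ (μ = 2 ∧ ν = 3 ∨ μ = 3 ∧ ν = 2) then -(p 2)⁻¹
  else 0

theorem siklosMetric_fn (b : ℝ) (H : Pt → ℝ) (μ ν : Fin 4) :
    siklosMetric b H μ ν = fun p => (b ^ 2 * (p 2) ^ 2)⁻¹ * ppMetric H μ ν p := rfl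

theorem Gam_fn (H : Pt → ℝ) (l μ ν : Fin 4) :
    Gam H l μ ν = fun p =>
  if l = 0 ∧ (μ = 0 ∧ ν = 2 ∨ μ = 2 ∧ ν = 0) then -(p 2)⁻¹
  else if l = 0 ∧ μ = 1 ∧ ν = 1 then (1/2) * pd 1 H p
  else if l = 0 ∧ (μ = 1 ∧ ν = 2 ∨ μ = 2 ∧ ν = 1) then (1/2) * pd 2 H p
  else if l = 0 ∧ (μ = 1 ∧ ν = 3 ∨ μ = 3 ∧ ν = 1) then (1/2) * pd 3 H p
  else if l = 1 ∧ (μ = 1 ∧ ν = 2 ∨ μ = 2 ∧ ν = 1) then -(p 2)⁻¹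
  else if l = 2 ∧ (μ = 0 ∧ ν = 1 ∨ μ = 1 ∧ ν = 0) then -(p 2)⁻¹
  else if l = 2 ∧ μ = 1 ∧ ν = 1 then -(H p) * (p 2)⁻¹ + (1/2) * pd 2 H p
  else if l = 2 ∧ μ = 2 ∧ ν = 2 then -(p 2)⁻¹
  else if l = 2 ∧ μ = 3 ∧ ν = 3 then (p 2)⁻¹
  else if l = 3 ∧ μ = 1 ∧ ν = 1 then (1/2) * pd 3 H p
  else if l = 3 ∧ (μ = 2 ∧ ν = 3 ∨ μ = 3 ∧ ν = 2) then -(p 2)⁻¹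
  else 0 := rfl

open pdcalc

set_option maxHeartbeats 4000000 in
theorem christoffel_eq (b : ℝ) (hb : 0 < b) (H : Pt → ℝ)
    (hH : ContDiff ℝ (⊤ : ℕ∞) H) (hHu : IndepCoord 0 H) (p : Pt) (hp : 0 < p 2)
    (l μ ν : Fin 4) :
    Christoffel (siklosMetric b H) (siklosMetricInv b H) l μ ν p = Gam H l μ ν p := by
  have hx : p 2 ≠ 0 := ne_of_gt hp
  have hb2 : b ^ 2 * (p 2) ^ 2 ≠ 0 := by positivity
  have hHd : Differentiable ℝ H := hH.differentiable (by simp)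
  have h0 : pd 0 H p = 0 := pd0_H hH hHu p
  fin_cases l <;> fin_cases μ <;> fin_cases ν <;>
  · simp only [Christoffel, Fin.sum_univ_four, siklosMetric_fn, siklosMetricInv,
      ppMetric, ppMetricInv, Gam, show ((0:Fin 4) = 1) = False by simp,
      show ((0:Fin 4) = 2) = False by simp, show ((0:Fin 4) = 3) = False by simp,
      show ((1:Fin 4) = 0) = False by simp, show ((1:Fin 4) = 2) = False by simp,
      show ((1:Fin 4) = 3) = False by simp, show ((2:Fin 4) = 0) = False by simp,
      show ((2:Fin 4) = 1) = False by simp, show ((2:Fin 4) = 3) = False by simp,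
      show ((3:Fin 4) = 0) = False by simp, show ((3:Fin 4) = 1) = False by simp,
      show ((3:Fin 4) = 2) = False by simp, show ((0:Fin 4) = 0) = True by simp,
      show ((1:Fin 4) = 1) = True by simp, show ((2:Fin 4) = 2) = True by simp,
      show ((3:Fin 4) = 3) = True by simp,
      if_true, if_false, true_and, false_and, and_true, and_false, or_false, false_or,
      ite_true, ite_false, mul_zero, zero_mul, mul_one, one_mul, mul_neg, neg_neg,
      add_zero, zero_add, sub_zero, zero_sub, neg_zero, true_or, or_true]
    simp (disch := first | positivity | fun_prop (disch := positivity))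
      [pow_two, pd_mul, pd_inv, pd_const, pd_coord, pd_add, pd_neg, h0]
    all_goals try field_simp
    all_goals try ring

set_option maxHeartbeats 4000000 in
/-- on U = {x > 0}, the Ricci tensor of the Siklos metric g = (b²x²)⁻¹ ĝ is
R_{μν} = (1/2)(Ĥ_xx + Ĥ_yy − (2/x) Ĥ_x) k_μ k_ν + 3 b² g_{μν}. -/
theorem siklos_ricci (b : ℝ) (hb : 0 < b) (H : Pt → ℝ)
    (hH : ContDiff ℝ (⊤ : ℕ∞) H) (hHu : IndepCoord 0 H) :
    ∀ p : Pt, 0 < p 2 → ∀ μ ν : Fin 4,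
      RicciT (siklosMetric b H) (siklosMetricInv b H) μ ν p
        = (1/2) * (pd 2 (pd 2 H) p + pd 3 (pd 3 H) p - (2 / p 2) * pd 2 H p)
            * kvec μ * kvec ν
          + 3 * b ^ 2 * siklosMetric b H μ ν p := by
  intro p hp μ ν
  have hx : p 2 ≠ 0 := ne_of_gt hp
  have hb2 : b ^ 2 * (p 2) ^ 2 ≠ 0 := by positivity
  have hHd : Differentiable ℝ H := hH.differentiable (by simp)
  have hd1 : Differentiable ℝ (pd 1 H) := diff_pd hH 1
  have hd2 : Differentiable ℝ (pd 2 H) := diff_pd hH 2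
  have hd3 : Differentiable ℝ (pd 3 H) := diff_pd hH 3
  have h0 : pd 0 H p = 0 := pd0_H hH hHu p
  have h01 : pd 0 (pd 1 H) p = 0 := pd0_pd hH hHu 1 p
  have h02 : pd 0 (pd 2 H) p = 0 := pd0_pd hH hHu 2 p
  have h03 : pd 0 (pd 3 H) p = 0 := pd0_pd hH hHu 3 p
  have hCe : ∀ l m n, Christoffel (siklosMetric b H) (siklosMetricInv b H) l m n p
      = Gam H l m n p := fun l m n => christoffel_eq b hb H hH hHu p hp l m n
  have hC : ∀ ρ l m n, pd ρ (Christoffel (siklosMetric b H) (siklosMetricInv b H) l m n) p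
      = pd ρ (Gam H l m n) p := by
    intro ρ l m n
    apply pd_congr
    have hopen : IsOpen {q : Pt | 0 < q 2} := isOpen_lt continuous_const (continuous_apply 2)
    filter_upwards [hopen.mem_nhds hp] with q hq
    exact christoffel_eq b hb H hH hHu q hq l m n
  fin_cases μ <;> fin_cases ν <;>
  · simp only [RicciT, Fin.sum_univ_four, hC, hCe]
    simp (disch := first | positivity | fun_prop (disch := positivity))
      [Gam_fn, pow_two, pd_mul, pd_inv, pd_const, pd_coord, pd_add, pd_neg,
       h0, h01, h02, h03, kvec, siklosMetric_fn, ppMetric]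
    all_goals try field_simp
    all_goals try ring
end
end

section
/- Let K be a field, let Ψ : K² × K² × K² × K² → K be a symmetric 4-multilinear map, and let u ∈ K² be nonzero and such that Ψ(x, y, z, u) = 0 for all x, y, z ∈ K². Then there exists F ∈ K such that Ψ(x, y, z, w) = F · ε(u,x) ε(u,y) ε(u,z) ε(u,w) for all x, y, z, w ∈ K². (This is the algebraic core of the claim that a totally symmetric Weyl curvature spinor Ψ_{ABCD} annihilated by a principal spinor, Ψ_{ABCD} o^D = 0, is of Petrov type N: Ψ_{ABCD} = F · o_A o_B o_C o_D.) -/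
/-! Pick `v` with `ε(u, v) = 1`, so that every `p` decomposes as `p = ε(p, v) u + ε(u, p) v`.
Expanding `Ψ(x, y, z, w)` multilinearly in the basis `u, v`, every term with a `u` in some slot
vanishes (by symmetry, any slot can be moved to the last one), leaving only
`ε(u,x) ε(u,y) ε(u,z) ε(u,w) Ψ(v, v, v, v)`. -/

/-- The standard symplectic form ε(a,b) = a₀b₁ − a₁b₀ on K². -/
def eps {K : Type*} [Field K] (a b : Fin 2 → K) : K := a 0 * b 1 - a 1 * b 0

namespace MultilinearMap

variable {R ι M N : Type*} [CommSemiring R] [AddCommMonoid M] [Module R M]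
  [AddCommMonoid N] [Module R N]

theorem map_eq_zero_of_apply_eq_of_symmetric (Ψ : MultilinearMap R (fun _ : ι => M) N)
    [DecidableEq ι] (hsym : ∀ (e : Equiv.Perm ι) (m : ι → M), Ψ (fun i => m (e i)) = Ψ m)
    {u : M} (i₀ : ι) (hann : ∀ m : ι → M, m i₀ = u → Ψ m = 0)
    (m : ι → M) (j : ι) (hj : m j = u) : Ψ m = 0 := by
  rw [← hsym (Equiv.swap j i₀) m]
  exact hann _ (by simpa using hj)

theorem map_smul_add_smul_of_map_eq_zero [Fintype ι] (Ψ : MultilinearMap R (fun _ : ι => M) N)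
    {u : M} (hu : ∀ (m : ι → M) (j : ι), m j = u → Ψ m = 0) (v : M) (a b : ι → R) :
    Ψ (fun i => a i • u + b i • v) = (∏ i, b i) • Ψ (fun _ => v) := by
  classical
  rw [← map_smul_univ, show (fun i => a i • u + b i • v) = (fun i => a i • u) + fun i => b i • v
    from rfl, map_add_univ, Finset.sum_eq_single_of_mem ∅ (Finset.mem_univ _)]
  · rw [Finset.piecewise_empty]
  intro s _ hs
  obtain ⟨j, hj⟩ := Finset.nonempty_iff_ne_empty.mpr hs
  set P := s.piecewise (fun i => a i • u) fun i => b i • v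
  have hPj : P j = a j • u := Finset.piecewise_eq_of_mem _ _ _ hj
  rw [← Function.update_eq_self j P, hPj, Ψ.map_update_smul,
    hu _ j (Function.update_self j u P), smul_zero]

end MultilinearMap

section Symplectic

variable {K : Type*} [Field K]

theorem exists_eps_eq_one {u : Fin 2 → K} (hu : u ≠ 0) : ∃ v : Fin 2 → K, eps u v = 1 := by
  by_cases h0 : u 0 = 0
  · have h1 : u 1 ≠ 0 := fun h1 => hu (funext fun i => by fin_cases i <;> simp [h0, h1])
    exact ⟨![-(u 1)⁻¹, 0], by simp [eps, h0, h1]⟩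
  · exact ⟨![0, (u 0)⁻¹], by simp [eps, h0]⟩

theorem eq_eps_smul_add_eps_smul {u v : Fin 2 → K} (huv : eps u v = 1) (p : Fin 2 → K) :
    p = eps p v • u + eps u p • v := by
  funext i
  fin_cases i
  · show p 0 = eps p v * u 0 + eps u p * v 0
    unfold eps at *
    linear_combination (-(p 0)) * huv
  · show p 1 = eps p v * u 1 + eps u p * v 1
    unfold eps at *
    linear_combination (-(p 1)) * huv

end Symplectic

/-- a symmetric 4-multilinear map Ψ on K² that is annihilated by a nonzero
spinor u in its last slot is of "Petrov type N":
Ψ(x,y,z,w) = F · ε(u,x) ε(u,y) ε(u,z) ε(u,w) for some F ∈ K. -/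
theorem symmetric_quartic_annihilated_is_typeN {K : Type*} [Field K]
    (Ψ : MultilinearMap K (fun _ : Fin 4 => Fin 2 → K) K)
    (hsym : ∀ (e : Equiv.Perm (Fin 4)) (m : Fin 4 → Fin 2 → K),
      Ψ (fun i => m (e i)) = Ψ m)
    (u : Fin 2 → K) (hu : u ≠ 0)
    (hann : ∀ x y z : Fin 2 → K, Ψ ![x, y, z, u] = 0) :
    ∃ F : K, ∀ x y z w : Fin 2 → K,
      Ψ ![x, y, z, w] = F * (eps u x * eps u y * eps u z * eps u w) := by
  obtain ⟨v, hv⟩ := exists_eps_eq_one hu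
  have hann_last : ∀ m : Fin 4 → Fin 2 → K, m 3 = u → Ψ m = 0 := by
    intro m hm
    have hm_eta : m = ![m 0, m 1, m 2, u] := by
      funext i; fin_cases i <;> simp [hm]
    rw [hm_eta]
    exact hann _ _ _
  have hann_any := Ψ.map_eq_zero_of_apply_eq_of_symmetric hsym 3 hann_last
  refine ⟨Ψ fun _ => v, fun x y z w => ?_⟩
  set m : Fin 4 → Fin 2 → K := ![x, y, z, w]
  calc Ψ m = Ψ fun i => eps (m i) v • u + eps u (m i) • v :=
        congrArg Ψ (funext fun i => eq_eps_smul_add_eps_smul hv (m i))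
    _ = (∏ i, eps u (m i)) • Ψ fun _ => v := Ψ.map_smul_add_smul_of_map_eq_zero hann_any v _ _
    _ = _ := by simp [m, Fin.prod_univ_four, mul_comm]
end
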